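/- Let N = K·p^n + 1 where p is prime, gcd(K,p)=1, K < p^n, and set J = ⌊(log_p K + n)/2⌋. If a is an integer with a^(K·p^J) ≢ 1 (mod N), a^(K·p^n) ≡ 1 (mod N), and Φ_p(a^(K·p^(m-1))) ≡ 0 (mod N) where m is the least index with a^(K·p^m) ≡ 1 (mod N), then N is prime. -/

import Mathlib

/-!
Let `m` be the least index with `a ^ (K * p ^ m) ≡ 1 (mod N)`; the hypotheses force `J < m ≤ n`, so
`p ∤ N`. For every prime `q ∣ N`, the element `b = a ^ (K * p ^ (m - 1))` is a root of `Φ_p` modulo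
`q`, and since `q ≠ p` this makes `a ^ K` of order exactly `p ^ m` in `(ZMod q)ˣ`. Hence
`p ^ m ∣ q - 1`, so `q > p ^ (J + 1)` and `q ^ 2 > p ^ (2 * (J + 1)) ≥ N`: every prime factor of `N`
exceeds `√N`.
-/

open Finset

theorem Nat.prime_of_forall_prime_dvd_lt_sq {N : ℕ} (hN : 1 < N)
    (h : ∀ q, q.Prime → q ∣ N → N < q ^ 2) : N.Prime := by
  by_contra hNp
  have hlt := h _ (Nat.minFac_prime hN.ne') (Nat.minFac_dvd N)
  have hle := Nat.minFac_sq_le_self (by omega) hNp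
  omega

theorem pow_mul_pow_eq_one_of_le {M : Type*} [Monoid M] {x : M} {K p m j : ℕ}
    (hx : x ^ (K * p ^ m) = 1) (hmj : m ≤ j) : x ^ (K * p ^ j) = 1 := by
  obtain ⟨c, hc⟩ := pow_dvd_pow p hmj
  rw [hc, ← mul_assoc, pow_mul, hx, one_pow]

section GeomSum

variable {R : Type*} [Ring R] {p : ℕ} [Fact p.Prime]

theorem orderOf_eq_prime_of_geom_sum_eq_zero (hpR : (p : R) ≠ 0) {y : R}
    (hy : ∑ i ∈ range p, y ^ i = 0) : orderOf y = p := by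
  refine orderOf_eq_prime ?_ ?_
  · rw [← sub_eq_zero, ← geom_sum_mul, hy, zero_mul]
  · rintro rfl
    simp only [one_pow, sum_const, card_range, nsmul_eq_mul, mul_one] at hy
    exact hpR hy

theorem orderOf_eq_prime_pow_of_geom_sum_eq_zero (hpR : (p : R) ≠ 0) {x : R} {k : ℕ}
    (hx : ∑ i ∈ range p, (x ^ p ^ k) ^ i = 0) : orderOf x = p ^ (k + 1) := by
  have hy := orderOf_eq_prime_of_geom_sum_eq_zero hpR hx
  refine orderOf_eq_prime_pow (fun h => ?_) ?_
  · rw [h, orderOf_one] at hy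
    exact (Fact.out : p.Prime).one_lt.ne hy
  · have := pow_orderOf_eq_one (x ^ p ^ k)
    rwa [hy, ← pow_mul, ← pow_succ] at this

end GeomSum

theorem pow_succ_dvd_sub_one_of_geom_sum_eq_zero {N p q k : ℕ} [hp : Fact p.Prime]
    [hq : Fact q.Prime] (hqN : q ∣ N) (hpN : ¬ p ∣ N) {x : ZMod N}
    (hx : ∑ i ∈ range p, (x ^ p ^ k) ^ i = 0) : p ^ (k + 1) ∣ q - 1 := by
  set y : ZMod q := ZMod.castHom hqN (ZMod q) x
  have hy : ∑ i ∈ range p, (y ^ p ^ k) ^ i = 0 := by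
    simpa only [map_sum, map_pow, map_zero] using congrArg (ZMod.castHom hqN (ZMod q)) hx
  have hpq : (p : ZMod q) ≠ 0 := by
    rw [Ne, ZMod.natCast_eq_zero_iff]
    intro hqp
    rw [(Nat.prime_dvd_prime_iff_eq hq.out hp.out).1 hqp] at hqN
    exact hpN hqN
  have horder := orderOf_eq_prime_pow_of_geom_sum_eq_zero hpq hy
  have hy0 : y ≠ 0 := by
    rintro h0
    rw [h0, orderOf_zero] at horder
    exact (pow_ne_zero _ hp.out.ne_zero) horder.symm
  exact horder ▸ ZMod.orderOf_dvd_card_sub_one hy0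

theorem algorithm_two_correct_general (p K n N J : ℕ) (hp : p.Prime) (hN : N = K * p ^ n + 1)
    (hJ2 : K * p ^ n < p ^ (2 * (J + 1)))
    (a : ℤ)
    (h1 : (a : ZMod N) ^ (K * p ^ J) ≠ 1)
    (h2 : (a : ZMod N) ^ (K * p ^ n) = 1)
    (h3 : ∀ m, ((a : ZMod N) ^ (K * p ^ m) = 1 ∧
        ∀ i < m, (a : ZMod N) ^ (K * p ^ i) ≠ 1) →
      ∑ i ∈ Finset.range p, ((a : ZMod N) ^ (K * p ^ (m - 1))) ^ i = 0) :
    Nat.Prime N := by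
  have := Fact.mk hp
  have hex : ∃ m, (a : ZMod N) ^ (K * p ^ m) = 1 := ⟨n, h2⟩
  obtain ⟨m, hm, hmin⟩ : ∃ m, (a : ZMod N) ^ (K * p ^ m) = 1 ∧
      ∀ i < m, (a : ZMod N) ^ (K * p ^ i) ≠ 1 :=
    ⟨Nat.find hex, Nat.find_spec hex, fun _ => Nat.find_min hex⟩
  have hJm : J < m := lt_of_not_ge fun h => h1 (pow_mul_pow_eq_one_of_le hm h)
  have hmn : m ≤ n := le_of_not_gt fun h => hmin n h h2
  have hpN : ¬ p ∣ N := by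
    rw [hN, Nat.dvd_add_right (dvd_mul_of_dvd_right (dvd_pow_self p (by omega)) K)]
    exact hp.not_dvd_one
  have hK : K ≠ 0 := by rintro rfl; simp at h1
  have hN1 : 1 < N := by
    have : 0 < K * p ^ n := Nat.mul_pos (Nat.pos_of_ne_zero hK) (pow_pos hp.pos n)
    omega
  obtain ⟨k, rfl⟩ := Nat.exists_eq_add_one_of_ne_zero (by omega : m ≠ 0)
  have hΦ : ∑ i ∈ range p, (((a : ZMod N) ^ K) ^ p ^ k) ^ i = 0 := by
    simpa only [add_tsub_cancel_right, pow_mul] using h3 (k + 1) ⟨hm, hmin⟩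
  refine Nat.prime_of_forall_prime_dvd_lt_sq hN1 fun q hq hqN => ?_
  have := Fact.mk hq
  have hpq : p ^ (J + 1) < q :=
    calc p ^ (J + 1) ≤ p ^ (k + 1) := Nat.pow_le_pow_right hp.pos hJm
      _ ≤ q - 1 := Nat.le_of_dvd (by have := hq.two_le; omega)
          (pow_succ_dvd_sub_one_of_geom_sum_eq_zero hqN hpN hΦ)
      _ < q := by have := hq.pos; omega
  calc N ≤ p ^ (2 * (J + 1)) := by omega
    _ = (p ^ (J + 1)) ^ 2 := by ring
    _ < q ^ 2 := Nat.pow_lt_pow_left hpq two_ne_zero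

theorem algorithm_two_correct (p K n N J : ℕ) (hp : p.Prime) (hK : 0 < K)
    (hn : 0 < n) (hKp : Nat.gcd K p = 1) (hKlt : K < p ^ n) (hN : N = K * p ^ n + 1)
    (hJ1 : p ^ (2 * J) ≤ K * p ^ n) (hJ2 : K * p ^ n < p ^ (2 * (J + 1)))
    (a : ℤ) (ha : IsCoprime a (N : ℤ))
    (h1 : (a : ZMod N) ^ (K * p ^ J) ≠ 1)
    (h2 : (a : ZMod N) ^ (K * p ^ n) = 1)
    (h3 : ∀ m, ((a : ZMod N) ^ (K * p ^ m) = 1 ∧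
        ∀ i < m, (a : ZMod N) ^ (K * p ^ i) ≠ 1) →
      ∑ i ∈ Finset.range p, ((a : ZMod N) ^ (K * p ^ (m - 1))) ^ i = 0) :
    Nat.Prime N :=
  algorithm_two_correct_general p K n N J hp hN hJ2 a h1 h2 h3
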